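/- The only Schur rings over the infinite cyclic group Z = ⟨z⟩ are the discrete Schur ring (every basic set a singleton {z^i}) and the symmetric Schur ring whose basic sets are {z^i, z^{-i}} for i ≥ 0. -/

import Mathlib

noncomputable def simpleQuantity (F : Type*) [Field F] {G : Type*} [Group G]
    (D : Finset G) : MonoidAlgebra F G :=
  ∑ g ∈ D, MonoidAlgebra.single g 1

structure SchurRing (F G : Type*) [Field F] [Group G] where
  parts : Set (Finset G)
  parts_nonempty : ∀ D ∈ parts, D.Nonempty
  cover : ∀ g : G, ∃ D ∈ parts, g ∈ D
  eq_of_mem : ∀ D₁ ∈ parts, ∀ D₂ ∈ parts, ∀ g : G, g ∈ D₁ → g ∈ D₂ → D₁ = D₂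
  one_mem : ({1} : Finset G) ∈ parts
  inv_mem : ∀ D ∈ parts, ∃ D' ∈ parts, ∀ g : G, g ∈ D' ↔ g⁻¹ ∈ D
  mul_mem : ∀ x ∈ Submodule.span F (simpleQuantity F '' parts),
    ∀ y ∈ Submodule.span F (simpleQuantity F '' parts),
    x * y ∈ Submodule.span F (simpleQuantity F '' parts)

noncomputable def SchurRing.span {F G : Type*} [Field F] [Group G] (A : SchurRing F G) :
    Submodule F (MonoidAlgebra F G) :=
  Submodule.span F (simpleQuantity F '' A.parts)

def SchurRing.IsASet {F G : Type*} [Field F] [Group G] (A : SchurRing F G)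
    (S : Set G) : Prop :=
  ∀ D ∈ A.parts, (∃ g ∈ D, g ∈ S) → ↑D ⊆ S

/-!
Wielandt's trick: for a prime `p` the `p`-th power of the simple quantity of a basic set `D` is
congruent modulo `p` to the simple quantity of `D^(p) = {d ^ p | d ∈ D}`, while its integer
coefficients are constant on basic sets. Hence the basic set of `g ^ p` lies in `D^(p)` for
`g ∈ D`, and by factoring `k` the same holds for every exponent `k`. For `k` large compared to the
elements of `D`, multiplying two such basic sets shows that `D^(k)` is exactly a basic set.
Comparing two of these dilations shows that all elements of a basic set have the same absolute
value, so every basic set is `{z^i}` or `{z^i, z^-i}`. Finally, translating by a thin element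
`z^b ≠ 1` (one with `{z^b}` basic) would turn a pair `{z^a, z^-a}`, `a ≠ 0`, into a basic set whose
two elements have different absolute values.
-/

open MonoidAlgebra Finset

section SimpleQuantity

variable {F G : Type*} [Field F] [Group G]

lemma simpleQuantity_singleton (g : G) : simpleQuantity F {g} = single g 1 :=
  sum_singleton _ _

lemma coeff_simpleQuantity [DecidableEq G] (D : Finset G) (g : G) :
    (simpleQuantity F D).coeff g = if g ∈ D then 1 else 0 := by
  simp only [simpleQuantity, coeff_sum, coeff_single]
  rw [sum_apply']
  simp [Finsupp.single_apply]

lemma coeff_simpleQuantity_mul_simpleQuantity [DecidableEq G] (C D : Finset G) (g : G) :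
    (simpleQuantity F C * simpleQuantity F D).coeff g = #{q ∈ C ×ˢ D | q.1 * q.2 = g} := by
  simp only [simpleQuantity, sum_mul_sum, single_mul_single, one_mul, ← sum_product',
    coeff_sum, coeff_single]
  rw [sum_apply']
  simp [Finsupp.single_apply, sum_boole]

lemma coeff_simpleQuantity_pow (D : Finset G) (n : ℕ) (g : G) :
    (simpleQuantity F D ^ n).coeff g = (((∑ d ∈ D, single d 1 : ℕ[G]) ^ n).coeff g : F) := by
  have hmap : mapRingHom G (Nat.castRingHom F) (∑ d ∈ D, single d 1) = simpleQuantity F D := by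
    simp [simpleQuantity]
  rw [← hmap, ← map_pow, coeff_mapRingHom]
  rfl

lemma simpleQuantity_pow_char {G : Type*} [CommGroup G] [IsMulTorsionFree G] [DecidableEq G]
    (p : ℕ) [Fact p.Prime] (D : Finset G) :
    simpleQuantity (ZMod p) D ^ p = simpleQuantity (ZMod p) (D.image (· ^ p)) := by
  have : CharP (ZMod p)[G] p := (Algebra.charP_iff (ZMod p) _ p).mp inferInstance
  rw [simpleQuantity, sum_pow_char, simpleQuantity,
    sum_image fun _ _ _ _ h => pow_left_injective (Fact.out : p.Prime).ne_zero h]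
  simp [single_pow]

end SimpleQuantity

namespace SchurRing

section Group

variable {F G : Type*} [Field F] [Group G] (A : SchurRing F G)

noncomputable def partOf (g : G) : Finset G := (A.cover g).choose

lemma partOf_mem_parts (g : G) : A.partOf g ∈ A.parts := (A.cover g).choose_spec.1

lemma mem_partOf_self (g : G) : g ∈ A.partOf g := (A.cover g).choose_spec.2

lemma partOf_eq_of_mem {D : Finset G} (hD : D ∈ A.parts) {g : G} (hg : g ∈ D) :
    A.partOf g = D :=
  A.eq_of_mem _ (A.partOf_mem_parts g) D hD g (A.mem_partOf_self g) hg

lemma partOf_eq_partOf {g x : G} (hx : x ∈ A.partOf g) : A.partOf x = A.partOf g :=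
  A.partOf_eq_of_mem (A.partOf_mem_parts g) hx

lemma partOf_one : A.partOf 1 = {1} :=
  A.partOf_eq_of_mem A.one_mem (mem_singleton_self 1)

lemma mem_partOf_inv {g x : G} : x ∈ A.partOf g⁻¹ ↔ x⁻¹ ∈ A.partOf g := by
  obtain ⟨D, hD, hmem⟩ := A.inv_mem _ (A.partOf_mem_parts g)
  rw [A.partOf_eq_of_mem hD ((hmem g⁻¹).2 (by simpa using A.mem_partOf_self g)), hmem]

lemma parts_eq_range_partOf : A.parts = Set.range A.partOf := by
  ext D
  refine ⟨fun hD => ?_, ?_⟩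
  · obtain ⟨g, hg⟩ := A.parts_nonempty D hD
    exact ⟨g, A.partOf_eq_of_mem hD hg⟩
  · rintro ⟨g, rfl⟩
    exact A.partOf_mem_parts g

lemma simpleQuantity_mem_span {D : Finset G} (hD : D ∈ A.parts) : simpleQuantity F D ∈ A.span :=
  Submodule.subset_span ⟨D, hD, rfl⟩

lemma mul_mem_span {x y : MonoidAlgebra F G} (hx : x ∈ A.span) (hy : y ∈ A.span) :
    x * y ∈ A.span :=
  A.mul_mem x hx y hy

lemma pow_mem_span {x : MonoidAlgebra F G} (hx : x ∈ A.span) (n : ℕ) : x ^ n ∈ A.span := by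
  have hone : (1 : MonoidAlgebra F G) ∈ A.span := by
    simpa [simpleQuantity_singleton, ← one_def] using A.simpleQuantity_mem_span A.one_mem
  exact (A.span.toSubalgebra hone fun _ _ => A.mul_mem_span).pow_mem hx n

variable {A}

lemma coeff_eq_of_mem_partOf {h : MonoidAlgebra F G} (hh : h ∈ A.span) {g x : G}
    (hx : x ∈ A.partOf g) : h.coeff x = h.coeff g := by
  classical
  induction hh using Submodule.span_induction with
  | mem _ hD =>
    obtain ⟨D, hD, rfl⟩ := hD
    have hiff : x ∈ D ↔ g ∈ D := by
      refine ⟨fun h => ?_, fun h => ?_⟩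
      · rw [← A.partOf_eq_of_mem hD h, A.partOf_eq_partOf hx]
        exact A.mem_partOf_self g
      · rwa [← A.partOf_eq_of_mem hD h]
    simp only [coeff_simpleQuantity, hiff]
  | zero => rfl
  | add _ _ _ _ h₁ h₂ => simp [coeff_add, h₁, h₂]
  | smul _ _ _ h => simp [coeff_smul, h]

lemma mul_inv_mem_partOf_mul_inv {b g x : G} (hb : {b} ∈ A.parts) (hx : x ∈ A.partOf g) :
    x * b⁻¹ ∈ A.partOf (g * b⁻¹) := by
  classical
  have hspan := A.mul_mem_span (A.simpleQuantity_mem_span (A.partOf_mem_parts (g * b⁻¹)))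
    (A.simpleQuantity_mem_span hb)
  have hcoeff := coeff_eq_of_mem_partOf hspan hx
  simp only [simpleQuantity_singleton, coeff_mul_single_apply, coeff_simpleQuantity,
    mem_partOf_self, if_true, mul_one] at hcoeff
  by_contra h
  simp [h] at hcoeff

end Group

section Dilation

variable {F G : Type*} [Field F] [CharZero F] [CommGroup G] [IsMulTorsionFree G] [DecidableEq G]
  (A : SchurRing F G)

theorem partOf_pow_prime_subset {p : ℕ} (hp : p.Prime) (g : G) :
    A.partOf (g ^ p) ⊆ (A.partOf g).image (· ^ p) := by
  have : Fact p.Prime := ⟨hp⟩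
  set D := A.partOf g
  set N : G → ℕ := fun x => ((∑ d ∈ D, single d 1 : ℕ[G]) ^ p).coeff x
  have hN : ∀ x, (N x : ZMod p) = if x ∈ D.image (· ^ p) then 1 else 0 := fun x => by
    rw [← coeff_simpleQuantity_pow, simpleQuantity_pow_char, coeff_simpleQuantity]
  intro x hx
  have hNx : N x = N (g ^ p) := by
    have := coeff_eq_of_mem_partOf (A.pow_mem_span (A.simpleQuantity_mem_span
      (A.partOf_mem_parts g)) p) hx
    rwa [coeff_simpleQuantity_pow, coeff_simpleQuantity_pow, Nat.cast_inj] at this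
  by_contra hxD
  have := hN x
  rw [hNx, hN, if_neg hxD, if_pos (mem_image_of_mem _ (A.mem_partOf_self g))] at this
  exact one_ne_zero this

theorem partOf_pow_subset (g : G) (k : ℕ) : A.partOf (g ^ k) ⊆ (A.partOf g).image (· ^ k) := by
  induction k using induction_on_primes generalizing g with
  | zero => simpa [A.partOf_one] using ⟨g, A.mem_partOf_self g⟩
  | one => simp
  | prime_mul p k hp ih =>
    rw [mul_comm, pow_mul]
    refine (A.partOf_pow_prime_subset hp _).trans ?_
    intro x hx
    obtain ⟨y, hy, rfl⟩ := mem_image.1 hx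
    obtain ⟨d, hd, rfl⟩ := mem_image.1 (ih g hy)
    exact mem_image.2 ⟨d, hd, by rw [pow_mul]⟩

end Dilation

end SchurRing

lemma Multiplicative.natAbs_toAdd_pow (g : Multiplicative ℤ) (k : ℕ) :
    (g ^ k).toAdd.natAbs = k * g.toAdd.natAbs := by
  simp [Int.natAbs_mul]

lemma Multiplicative.natAbs_toAdd_eq_iff {x y : Multiplicative ℤ} :
    x.toAdd.natAbs = y.toAdd.natAbs ↔ x = y ∨ x = y⁻¹ := by
  rw [Int.natAbs_eq_natAbs_iff, ← toAdd_inv, toAdd.injective.eq_iff, toAdd.injective.eq_iff]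

/-- The additive form of the equation is `k (u - v) = b - v`, with `|b - v| < k`. -/
lemma Multiplicative.eq_of_pow_mul_inv_pow_sub_one_eq {k : ℕ} {u v b : Multiplicative ℤ}
    (hv : 2 * v.toAdd.natAbs < k) (hb : 2 * b.toAdd.natAbs < k)
    (h : u ^ k * (v ^ (k - 1))⁻¹ = b) : u = b ∧ v = b := by
  have hk : 1 ≤ k := by omega
  have hv' : 2 * |v.toAdd| < k := by rw [← Int.natCast_natAbs]; exact_mod_cast hv
  have hb' : 2 * |b.toAdd| < k := by rw [← Int.natCast_natAbs]; exact_mod_cast hb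
  have heq : (k : ℤ) * (u.toAdd - v.toAdd) = b.toAdd - v.toAdd := by
    have := congrArg toAdd h
    simp only [toAdd_mul, toAdd_inv, toAdd_pow, nsmul_eq_mul, Nat.cast_sub hk, Nat.cast_one] at this
    linarith
  have huv : u.toAdd = v.toAdd := by
    rcases lt_trichotomy u.toAdd v.toAdd with h | h | h
    · nlinarith [le_abs_self v.toAdd, neg_abs_le v.toAdd, le_abs_self b.toAdd, neg_abs_le b.toAdd]
    · exact h
    · nlinarith [le_abs_self v.toAdd, neg_abs_le v.toAdd, le_abs_self b.toAdd, neg_abs_le b.toAdd]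
  have hvb : v = b := toAdd.injective (by rw [huv, sub_self, mul_zero] at heq; linarith)
  exact ⟨(toAdd.injective huv).trans hvb, hvb⟩

namespace SchurRing

section Int

variable {F : Type*} [Field F] (A : SchurRing F (Multiplicative ℤ))

open Multiplicative

lemma exists_mem_partOf_natAbs_toAdd_eq {g g' x : Multiplicative ℤ}
    (h : g.toAdd.natAbs = g'.toAdd.natAbs) (hx : x ∈ A.partOf g) :
    ∃ y ∈ A.partOf g', y.toAdd.natAbs = x.toAdd.natAbs := by
  rcases natAbs_toAdd_eq_iff.1 h with rfl | rfl
  · exact ⟨x, hx, rfl⟩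
  · exact ⟨x⁻¹, A.mem_partOf_inv.1 hx, by simp⟩

variable [CharZero F]

/-- In the product of `A.partOf (g ^ k)` and `A.partOf (g ^ (k - 1))⁻¹`, the only possible
factorization of `b ∈ A.partOf g` is `b ^ k * (b ^ (k - 1))⁻¹`. It does occur for `b = g`, so by
constancy of coefficients it occurs for every `b`, which puts `b ^ k` in `A.partOf (g ^ k)`. -/
theorem partOf_pow_eq_image_pow {g : Multiplicative ℤ} {k : ℕ}
    (hk : ∀ d ∈ A.partOf g, 2 * d.toAdd.natAbs < k) :
    A.partOf (g ^ k) = (A.partOf g).image (· ^ k) := by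
  set D := A.partOf g
  set C := A.partOf (g ^ k)
  set C' := A.partOf (g ^ (k - 1))⁻¹
  set R : Multiplicative ℤ → Finset (Multiplicative ℤ × Multiplicative ℤ) :=
    fun b => {q ∈ C ×ˢ C' | q.1 * q.2 = b}
  have hR : ∀ b ∈ D, R b ⊆ {(b ^ k, (b ^ (k - 1))⁻¹)} := by
    rintro b hb ⟨q₁, q₂⟩ hq
    obtain ⟨⟨hq₁, hq₂⟩, hqb⟩ := by simpa [R] using hq
    obtain ⟨u, hu, rfl⟩ := mem_image.1 (A.partOf_pow_subset g k hq₁)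
    obtain ⟨v, hv, hvq⟩ := mem_image.1 (A.partOf_pow_subset g (k - 1) (A.mem_partOf_inv.1 hq₂))
    obtain rfl := inv_eq_iff_eq_inv.1 hvq.symm
    obtain ⟨rfl, rfl⟩ := eq_of_pow_mul_inv_pow_sub_one_eq (hk v hv) (hk b hb) hqb
    exact mem_singleton_self _
  have hRg : R g = {(g ^ k, (g ^ (k - 1))⁻¹)} := by
    refine subset_antisymm (hR g (A.mem_partOf_self g)) (singleton_subset_iff.2 ?_)
    have hk0 : k ≠ 0 := by have := hk g (A.mem_partOf_self g); omega
    simpa [R, C, C', A.mem_partOf_self] using mul_inv_eq_of_eq_mul (mul_pow_sub_one hk0 g).symm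
  have hcard : ∀ b ∈ D, #(R b) = 1 := by
    intro b hb
    have hspan := A.mul_mem_span (A.simpleQuantity_mem_span (A.partOf_mem_parts (g ^ k)))
      (A.simpleQuantity_mem_span (A.partOf_mem_parts (g ^ (k - 1))⁻¹))
    have := coeff_eq_of_mem_partOf hspan hb
    rw [coeff_simpleQuantity_mul_simpleQuantity, coeff_simpleQuantity_mul_simpleQuantity,
      Nat.cast_inj] at this
    change #(R b) = #(R g) at this
    rw [this, hRg, card_singleton]
  refine subset_antisymm (A.partOf_pow_subset g k) fun y hy => ?_
  obtain ⟨b, hb, rfl⟩ := mem_image.1 hy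
  obtain ⟨q, hq⟩ := card_pos.1 (by rw [hcard b hb]; exact one_pos)
  have hqb := mem_singleton.1 (hR b hb hq)
  subst hqb
  exact (mem_product.1 (mem_filter.1 hq).1).1

/-- Write `|x|` for `x.toAdd.natAbs` and let `t = 2|c| + 1`. Since `|c ^ (t|b|)| = |b ^ (t|c|)|`,
the basic sets of these two elements agree up to inversion; they are the exact dilations of
`A.partOf c` by `t|b|` and by `t|c|`, and the second contains `c ^ (t|c|)`. So the first contains
some `d ^ (t|b|)` with `|b| |d| = |c| ^ 2`, while `|d| ≤ |c|`. -/
lemma natAbs_toAdd_le_of_mem_partOf {b c : Multiplicative ℤ}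
    (hc : ∀ d ∈ A.partOf c, d.toAdd.natAbs ≤ c.toAdd.natAbs) (hb : b ∈ A.partOf c) :
    c.toAdd.natAbs ≤ b.toAdd.natAbs := by
  have hbc := A.partOf_eq_partOf hb
  by_cases hc1 : c = 1
  · simp [hc1]
  have hb1 : b ≠ 1 := by
    rintro rfl
    have := A.mem_partOf_self c
    rw [← hbc, A.partOf_one, mem_singleton] at this
    exact hc1 this
  have hb0 : 0 < b.toAdd.natAbs := Int.natAbs_pos.2 (toAdd_eq_zero.not.2 hb1)
  have hc0 : 0 < c.toAdd.natAbs := Int.natAbs_pos.2 (toAdd_eq_zero.not.2 hc1)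
  set t := 2 * c.toAdd.natAbs + 1
  have hdil : ∀ {m : ℕ}, 0 < m → ∀ e ∈ A.partOf c,
      A.partOf (e ^ (t * m)) = (A.partOf c).image (· ^ (t * m)) := fun hm e he => by
    rw [← A.partOf_eq_partOf he]
    refine A.partOf_pow_eq_image_pow fun d hd => ?_
    rw [A.partOf_eq_partOf he] at hd
    have := Nat.le_mul_of_pos_right t hm
    have := hc d hd
    omega
  obtain ⟨y, hy, hyc⟩ := A.exists_mem_partOf_natAbs_toAdd_eq
    (g := b ^ (t * c.toAdd.natAbs)) (g' := c ^ (t * b.toAdd.natAbs))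
    (by simp only [natAbs_toAdd_pow]; ring)
    (by rw [hdil hc0 b hb]; exact mem_image_of_mem _ (A.mem_partOf_self c))
  rw [hdil hb0 c (A.mem_partOf_self c)] at hy
  obtain ⟨d, hd, rfl⟩ := mem_image.1 hy
  simp only [natAbs_toAdd_pow, mul_assoc] at hyc
  have hbd : b.toAdd.natAbs * d.toAdd.natAbs = c.toAdd.natAbs * c.toAdd.natAbs :=
    Nat.eq_of_mul_eq_mul_left (by omega) hyc
  exact Nat.le_of_mul_le_mul_right (hbd ▸ Nat.mul_le_mul_left _ (hc d hd)) hc0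

theorem natAbs_toAdd_eq_of_mem_partOf {g x : Multiplicative ℤ} (hx : x ∈ A.partOf g) :
    x.toAdd.natAbs = g.toAdd.natAbs := by
  obtain ⟨c, hc, hmax⟩ := (A.partOf g).exists_max_image (·.toAdd.natAbs) ⟨g, A.mem_partOf_self g⟩
  have hcg := A.partOf_eq_partOf hc
  have hsize : ∀ b ∈ A.partOf g, b.toAdd.natAbs = c.toAdd.natAbs := fun b hb =>
    le_antisymm (hmax b hb) (A.natAbs_toAdd_le_of_mem_partOf (hcg ▸ hmax) (hcg ▸ hb))
  rw [hsize x hx, hsize g (A.mem_partOf_self g)]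

theorem partOf_eq_singleton_or_pair (g : Multiplicative ℤ) :
    A.partOf g = {g} ∨ A.partOf g = {g, g⁻¹} := by
  have hsub : ∀ x ∈ A.partOf g, x = g ∨ x = g⁻¹ := fun x hx =>
    natAbs_toAdd_eq_iff.1 (A.natAbs_toAdd_eq_of_mem_partOf hx)
  by_cases hinv : g⁻¹ ∈ A.partOf g
  · exact .inr <| subset_antisymm (fun x hx => by simpa using hsub x hx)
      (insert_subset (A.mem_partOf_self g) (singleton_subset_iff.2 hinv))
  · refine .inl <| eq_singleton_iff_unique_mem.2 ⟨A.mem_partOf_self g, fun x hx => ?_⟩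
    refine (hsub x hx).resolve_right ?_
    rintro rfl
    exact hinv hx

/-- Translating by `b⁻¹` moves `a⁻¹ ∈ A.partOf a` to `a⁻¹ * b⁻¹ ∈ A.partOf (a * b⁻¹)`,
and `|-a - b| = |a - b|` forces `a = 0` or `b = 0`. -/
lemma eq_one_or_eq_one_of_inv_mem_partOf {a b : Multiplicative ℤ} (ha : a⁻¹ ∈ A.partOf a)
    (hb : {b} ∈ A.parts) : a = 1 ∨ b = 1 := by
  have := A.natAbs_toAdd_eq_of_mem_partOf (A.mul_inv_mem_partOf_mul_inv hb ha)
  simp only [toAdd_mul, toAdd_inv] at this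
  rcases Int.natAbs_eq_natAbs_iff.1 this with h | h
  · exact .inl (toAdd_eq_zero.1 (by omega))
  · exact .inr (toAdd_eq_zero.1 (by omega))

end Int

end SchurRing

/-- The only Schur rings over the infinite cyclic group are the discrete one and
the symmetric one with basic sets `{z^i, z^{-i}}`. -/
theorem schurRing_int {F : Type*} [Field F] [CharZero F]
    (A : SchurRing F (Multiplicative ℤ)) :
    A.parts = {D : Finset (Multiplicative ℤ) | ∃ g : Multiplicative ℤ, D = {g}} ∨
    A.parts = {D : Finset (Multiplicative ℤ) |
      ∃ i : ℤ, D = {Multiplicative.ofAdd i, Multiplicative.ofAdd (-i)}} := by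
  rw [A.parts_eq_range_partOf]
  by_cases h : ∃ a ≠ 1, a⁻¹ ∈ A.partOf a
  · obtain ⟨a, ha1, ha⟩ := h
    have hpair : ∀ g, A.partOf g = {g, g⁻¹} := fun g => by
      rcases A.partOf_eq_singleton_or_pair g with hg | hg
      · obtain rfl := (A.eq_one_or_eq_one_of_inv_mem_partOf ha
          (hg ▸ A.partOf_mem_parts g)).resolve_left ha1
        simpa using hg
      · exact hg
    right
    ext D
    simp only [Set.mem_range, hpair]
    exact ⟨fun ⟨g, hg⟩ => ⟨g.toAdd, by simp [← hg]⟩, fun ⟨i, hi⟩ => ⟨.ofAdd i, by simp [hi]⟩⟩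
  · push Not at h
    have hsingle : ∀ g, A.partOf g = {g} := fun g => by
      rcases A.partOf_eq_singleton_or_pair g with hg | hg
      · exact hg
      · by_cases hg1 : g = 1
        · rw [hg1, A.partOf_one]
        · exact absurd (hg ▸ mem_insert_of_mem (mem_singleton_self _)) (h g hg1)
    left
    ext D
    simp [hsingle, eq_comm]
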